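/- arXiv:2505.00434 — 8 statements merged into one kernel-verified Lean document; each statement's English description precedes it below -/
import Mathlib

section
/- Suppose the quadrature condition Σ_k Δc·ω_k = 1 holds. If the data satisfy the compatibility constraint uⁿ_i = Σ_k Δc·fⁿ_{k,i} for every cell i ∈ ℤ/Iℤ, then after one step of the first-order UGKS the constraint is preserved: u^{n+1}_i = Σ_k Δc·f^{n+1}_{k,i} for every i ∈ ℤ/Iℤ. -/
open Finset Real

/-- Constraint-preserving property of the first-order UGKS.
Cells are indexed by `ZMod I` (periodic boundary conditions); particle
velocities by integers `k` with `|k| ≤ K`, i.e. `k ∈ Finset.Icc (-K) K`.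
An interface function evaluated at `i` stands for the value at `i + 1/2`. -/
theorem ugks_constraint_preserving
    (I : ℕ) [NeZero I] (K : ℕ) (hK : 1 ≤ K)
    (Δx Δc Δt τ a θ : ℝ)
    (hΔx : 0 < Δx) (hΔc : 0 < Δc) (hΔt : 0 < Δt) (hτ : 0 < τ) (ha : 0 < a) (hθ : 0 < θ)
    (c ω : ℤ → ℝ)
    (hc : ∀ k : ℤ, c k = a + (k : ℝ) * Δc)
    (hω : ∀ k : ℤ, ω k = (1 / Real.sqrt (θ * Real.pi)) * Real.exp (-(c k - a) ^ 2 / θ))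
    (E W : ℝ)
    (hE : E = ∫ t in (0:ℝ)..(a / Real.sqrt θ), Real.exp (-t ^ 2))
    (hW : W = (τ / Δt) * (1 - Real.exp (-(Δt / τ))))
    (fn : ℤ → ZMod I → ℝ) (un : ZMod I → ℝ)
    -- interface values (value at cell interface i + 1/2)
    (fIf fgIf gIf fstar : ℤ → ZMod I → ℝ) (ugIf Fstar : ZMod I → ℝ)
    (hfIf : ∀ k i, fIf k i
      = (1 / 2) * (fn k i + fn k (i + 1))
        - (1 / 2) * Real.sign (c k) * (fn k (i + 1) - fn k i))
    (hfgIf : ∀ k i, fgIf k i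
      = (1 / 2) * (fn k i + fn k (i + 1)) - E * (fn k (i + 1) - fn k i))
    (hugIf : ∀ i, ugIf i
      = ∑ l ∈ Finset.Icc (-(K : ℤ)) (K : ℤ),
          Δc * (c l / Real.sqrt (a ^ 2 + θ / 2)) * fgIf l i)
    (hgIf : ∀ k i, gIf k i = ugIf i * ω k)
    (hfstar : ∀ k i, fstar k i = (1 - W) * gIf k i + W * fIf k i)
    (hFstar : ∀ i, Fstar i = ∑ k ∈ Finset.Icc (-(K : ℤ)) (K : ℤ), Δc * c k * fstar k i)
    -- the UGKS update
    (un1 : ZMod I → ℝ) (fn1 : ℤ → ZMod I → ℝ)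
    (hun1 : ∀ i, un1 i = un i - (Δt / Δx) * (Fstar i - Fstar (i - 1)))
    (hfn1 : ∀ k i, fn1 k i
      = (1 + Δt / τ)⁻¹ * (fn k i - (c k * Δt / Δx) * (fstar k i - fstar k (i - 1)))
        + ((Δt / τ) / (1 + Δt / τ)) * (un1 i * ω k))
    -- quadrature condition
    (hquad : ∑ k ∈ Finset.Icc (-(K : ℤ)) (K : ℤ), Δc * ω k = 1)
    -- compatibility constraint at time n
    (hcompat : ∀ i, un i = ∑ k ∈ Finset.Icc (-(K : ℤ)) (K : ℤ), Δc * fn k i) :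
    -- the constraint is preserved at time n+1
    ∀ i, un1 i = ∑ k ∈ Finset.Icc (-(K : ℤ)) (K : ℤ), Δc * fn1 k i := by
  intro i
  have hs : (1 + Δt / τ) ≠ 0 := by positivity
  have S2 : ∑ k ∈ Finset.Icc (-(K : ℤ)) (K : ℤ),
      Δc * ((c k * Δt / Δx) * (fstar k i - fstar k (i - 1)))
      = (Δt / Δx) * (Fstar i - Fstar (i - 1)) := by
    rw [hFstar, hFstar, ← Finset.sum_sub_distrib, Finset.mul_sum]
    exact Finset.sum_congr rfl fun k _ => by ring
  have key : ∑ k ∈ Finset.Icc (-(K : ℤ)) (K : ℤ), Δc * fn1 k i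
      = (1 + Δt / τ)⁻¹ * (un i - (Δt / Δx) * (Fstar i - Fstar (i - 1)))
        + ((Δt / τ) / (1 + Δt / τ)) * un1 i := by
    have : ∑ k ∈ Finset.Icc (-(K : ℤ)) (K : ℤ), Δc * fn1 k i
        = (1 + Δt / τ)⁻¹ * ((∑ k ∈ Finset.Icc (-(K : ℤ)) (K : ℤ), Δc * fn k i)
            - ∑ k ∈ Finset.Icc (-(K : ℤ)) (K : ℤ),
                Δc * ((c k * Δt / Δx) * (fstar k i - fstar k (i - 1))))
          + ((Δt / τ) / (1 + Δt / τ)) * un1 i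
            * ∑ k ∈ Finset.Icc (-(K : ℤ)) (K : ℤ), Δc * ω k := by
      rw [← Finset.sum_sub_distrib, Finset.mul_sum, Finset.mul_sum, ← Finset.sum_add_distrib]
      exact Finset.sum_congr rfl fun k _ => by rw [hfn1]; ring
    rw [this, hquad, S2, ← hcompat i, mul_one]
  rw [key, ← hun1 i]
  field_simp
end

section
/- Assume Σ_k Δc·ω_k = 1. If u : ℤ/Iℤ → ℝ and f : {k : |k| ≤ K} × ℤ/Iℤ → ℝ satisfy u_i = Σ_k Δc·f_{k,i} for every i, then ‖u‖_{l²} ≤ ‖f‖_{L²}, i.e. the discrete l² norm of the conservative variable is bounded by the weighted L² norm of the distribution function. -/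
open Finset Real

/-- The discrete l² norm of the conservative variable is bounded
by the weighted L² norm of the distribution function, provided the
compatibility constraint and the quadrature condition hold. -/
theorem conservative_l2_le_weighted_L2
    (I : ℕ) [NeZero I] (K : ℕ) (hK : 1 ≤ K)
    (Δx Δc a θ : ℝ)
    (hΔx : 0 < Δx) (hΔc : 0 < Δc) (ha : 0 < a) (hθ : 0 < θ)
    (c ω : ℤ → ℝ)
    (hc : ∀ k : ℤ, c k = a + (k : ℝ) * Δc)
    (hω : ∀ k : ℤ, ω k = (1 / Real.sqrt (θ * Real.pi)) * Real.exp (-(c k - a) ^ 2 / θ))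
    (hquad : ∑ k ∈ Finset.Icc (-(K : ℤ)) (K : ℤ), Δc * ω k = 1)
    (u : ZMod I → ℝ) (f : ℤ → ZMod I → ℝ)
    (hcompat : ∀ i, u i = ∑ k ∈ Finset.Icc (-(K : ℤ)) (K : ℤ), Δc * f k i) :
    Real.sqrt (∑ i : ZMod I, Δx * (u i) ^ 2)
      ≤ Real.sqrt (∑ k ∈ Finset.Icc (-(K : ℤ)) (K : ℤ),
          Δc * (ω k)⁻¹ * ∑ i : ZMod I, Δx * (f k i) ^ 2) := by
  have hωpos : ∀ k : ℤ, 0 < ω k := by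
    intro k
    rw [hω k]
    positivity
  apply Real.sqrt_le_sqrt
  set S := Finset.Icc (-(K : ℤ)) (K : ℤ)
  have key : ∀ i : ZMod I, (u i) ^ 2 ≤ ∑ k ∈ S, Δc * (ω k)⁻¹ * (f k i) ^ 2 := by
    intro i
    have hcs := Finset.sum_mul_sq_le_sq_mul_sq S
      (fun k => Real.sqrt (Δc * ω k)) (fun k => Real.sqrt (Δc * (ω k)⁻¹) * f k i)
    have h1 : ∀ k ∈ S, Real.sqrt (Δc * ω k) * (Real.sqrt (Δc * (ω k)⁻¹) * f k i)
        = Δc * f k i := by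
      intro k _
      rw [← mul_assoc, ← Real.sqrt_mul (mul_pos hΔc (hωpos k)).le]
      have : Δc * ω k * (Δc * (ω k)⁻¹) = Δc ^ 2 := by
        field_simp [(hωpos k).ne']
      rw [this, Real.sqrt_sq hΔc.le]
    have h2 : ∀ k ∈ S, Real.sqrt (Δc * ω k) ^ 2 = Δc * ω k := by
      intro k _; exact Real.sq_sqrt (mul_pos hΔc (hωpos k)).le
    have h3 : ∀ k ∈ S, (Real.sqrt (Δc * (ω k)⁻¹) * f k i) ^ 2
        = Δc * (ω k)⁻¹ * (f k i) ^ 2 := by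
      intro k _
      rw [mul_pow, Real.sq_sqrt (mul_pos hΔc (inv_pos.mpr (hωpos k))).le]
    rw [Finset.sum_congr rfl h1, Finset.sum_congr rfl h2, Finset.sum_congr rfl h3] at hcs
    rw [hquad, one_mul] at hcs
    calc (u i) ^ 2 = (∑ k ∈ S, Δc * f k i) ^ 2 := by rw [hcompat i]
      _ ≤ _ := hcs
  calc ∑ i : ZMod I, Δx * (u i) ^ 2
      ≤ ∑ i : ZMod I, Δx * ∑ k ∈ S, Δc * (ω k)⁻¹ * (f k i) ^ 2 := by
        apply Finset.sum_le_sum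
        intro i _
        exact mul_le_mul_of_nonneg_left (key i) hΔx.le
    _ = ∑ k ∈ S, Δc * (ω k)⁻¹ * ∑ i : ZMod I, Δx * (f k i) ^ 2 := by
        simp_rw [Finset.mul_sum]
        rw [Finset.sum_comm]
        apply Finset.sum_congr rfl
        intro k _
        apply Finset.sum_congr rfl
        intro i _; ring
end

section
/- (Stability of the free-transport sub-method.) Suppose |c_k|·Δt/Δx ≤ 1 for every integer k with |k| ≤ K. Then the free-transport update f^f_{k,i} = fⁿ_{k,i} − (c_k·Δt/Δx)·(f_{k,i+1/2} − f_{k,i−1/2}), with upwind interface values f_{k,i+1/2} = ½(fⁿ_{k,i} + fⁿ_{k,i+1}) − ½·sign(c_k)·(fⁿ_{k,i+1} − fⁿ_{k,i}) and periodic boundary conditions, satisfies ‖f^f‖_{L²} ≤ ‖fⁿ‖_{L²}. -/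
open Finset Real

lemma conv_shift_sum (I : ℕ) [NeZero I] (g : ZMod I → ℝ) (s : ZMod I) (l : ℝ)
    (h0 : 0 ≤ l) (h1 : l ≤ 1) :
    ∑ i : ZMod I, ((1 - l) * g i + l * g (i + s)) ^ 2 ≤ ∑ i : ZMod I, (g i) ^ 2 := by
  have hshift : ∑ i : ZMod I, (g (i + s)) ^ 2 = ∑ i : ZMod I, (g i) ^ 2 :=
    Fintype.sum_equiv (Equiv.addRight s) _ _ (fun i => rfl)
  calc ∑ i : ZMod I, ((1 - l) * g i + l * g (i + s)) ^ 2
      ≤ ∑ i : ZMod I, ((1 - l) * (g i) ^ 2 + l * (g (i + s)) ^ 2) := by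
        apply Finset.sum_le_sum
        intro i _
        nlinarith [mul_nonneg (mul_nonneg h0 (by linarith : (0:ℝ) ≤ 1 - l)) (sq_nonneg (g i - g (i + s)))]
    _ = (1 - l) * ∑ i : ZMod I, (g i) ^ 2 + l * ∑ i : ZMod I, (g (i + s)) ^ 2 := by
        rw [Finset.sum_add_distrib, Finset.mul_sum, Finset.mul_sum]
    _ = ∑ i : ZMod I, (g i) ^ 2 := by rw [hshift]; ring

/-- Weighted L²-stability of the particle free-transport
(upwind) sub-method under the kinetic CFL condition. An interface function
evaluated at `i` stands for the value at `i + 1/2`. -/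
theorem free_transport_stability
    (I : ℕ) [NeZero I] (K : ℕ) (hK : 1 ≤ K)
    (Δx Δc Δt a θ : ℝ)
    (hΔx : 0 < Δx) (hΔc : 0 < Δc) (hΔt : 0 < Δt) (ha : 0 < a) (hθ : 0 < θ)
    (c ω : ℤ → ℝ)
    (hc : ∀ k : ℤ, c k = a + (k : ℝ) * Δc)
    (hω : ∀ k : ℤ, ω k = (1 / Real.sqrt (θ * Real.pi)) * Real.exp (-(c k - a) ^ 2 / θ))
    (hCFL : ∀ k ∈ Finset.Icc (-(K : ℤ)) (K : ℤ), |c k| * Δt / Δx ≤ 1)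
    (fn : ℤ → ZMod I → ℝ)
    (fIf ff : ℤ → ZMod I → ℝ)
    (hfIf : ∀ k i, fIf k i
      = (1 / 2) * (fn k i + fn k (i + 1))
        - (1 / 2) * Real.sign (c k) * (fn k (i + 1) - fn k i))
    (hff : ∀ k i, ff k i = fn k i - (c k * Δt / Δx) * (fIf k i - fIf k (i - 1))) :
    Real.sqrt (∑ k ∈ Finset.Icc (-(K : ℤ)) (K : ℤ),
        Δc * (ω k)⁻¹ * ∑ i : ZMod I, Δx * (ff k i) ^ 2)
      ≤ Real.sqrt (∑ k ∈ Finset.Icc (-(K : ℤ)) (K : ℤ),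
        Δc * (ω k)⁻¹ * ∑ i : ZMod I, Δx * (fn k i) ^ 2) := by
  apply Real.sqrt_le_sqrt
  apply Finset.sum_le_sum
  intro k hk
  have hωpos : 0 < ω k := by
    rw [hω k]
    positivity
  have hcore : ∑ i : ZMod I, (ff k i) ^ 2 ≤ ∑ i : ZMod I, (fn k i) ^ 2 := by
    set ν : ℝ := c k * Δt / Δx with hν
    have hνabs : |ν| ≤ 1 := by
      have := hCFL k hk
      rw [hν, abs_div, abs_mul, abs_of_pos hΔt, abs_of_pos hΔx]
      exact this
    rcases lt_trichotomy (c k) 0 with hcneg | hczero | hcpos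
    · -- c k < 0 : fIf k i = fn k (i+1), l = -ν, shift = 1
      have hsign : Real.sign (c k) = -1 := Real.sign_of_neg hcneg
      have hff' : ∀ i, ff k i = (1 - (-ν)) * fn k i + (-ν) * fn k (i + 1) := by
        intro i
        rw [hff, hfIf, hfIf, hsign]
        have : (i : ZMod I) - 1 + 1 = i := by ring
        rw [this]
        ring
      have hl0 : 0 ≤ -ν := by
        have : ν ≤ 0 := by
          apply div_nonpos_of_nonpos_of_nonneg
          · exact mul_nonpos_of_nonpos_of_nonneg hcneg.le hΔt.le
          · exact hΔx.le
        linarith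
      have hl1 : -ν ≤ 1 := by linarith [(abs_le.mp hνabs).1]
      calc ∑ i : ZMod I, (ff k i) ^ 2
          = ∑ i : ZMod I, ((1 - (-ν)) * fn k i + (-ν) * fn k (i + 1)) ^ 2 := by
            apply Finset.sum_congr rfl; intro i _; rw [hff' i]
        _ ≤ ∑ i : ZMod I, (fn k i) ^ 2 :=
            conv_shift_sum I (fn k) 1 (-ν) hl0 hl1
    · -- c k = 0
      have hff' : ∀ i, ff k i = fn k i := by
        intro i
        rw [hff, hczero]
        ring
      apply le_of_eq
      apply Finset.sum_congr rfl
      intro i _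
      rw [hff' i]
    · -- c k > 0 : fIf k i = fn k i, l = ν, shift = -1
      have hsign : Real.sign (c k) = 1 := Real.sign_of_pos hcpos
      have hff' : ∀ i, ff k i = (1 - ν) * fn k i + ν * fn k (i + (-1)) := by
        intro i
        rw [hff, hfIf, hfIf, hsign]
        have : (i : ZMod I) + (-1) = i - 1 := by ring
        rw [this]
        have h2 : (i : ZMod I) - 1 + 1 = i := by ring
        rw [h2]
        ring
      have hl0 : 0 ≤ ν := by
        apply div_nonneg _ hΔx.le
        exact mul_nonneg hcpos.le hΔt.le
      have hl1 : ν ≤ 1 := (abs_le.mp hνabs).2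
      calc ∑ i : ZMod I, (ff k i) ^ 2
          = ∑ i : ZMod I, ((1 - ν) * fn k i + ν * fn k (i + (-1))) ^ 2 := by
            apply Finset.sum_congr rfl; intro i _; rw [hff' i]
        _ ≤ ∑ i : ZMod I, (fn k i) ^ 2 :=
            conv_shift_sum I (fn k) (-1) ν hl0 hl1
  have hw : 0 ≤ Δc * (ω k)⁻¹ := by positivity
  apply mul_le_mul_of_nonneg_left _ hw
  rw [← Finset.mul_sum, ← Finset.mul_sum]
  exact mul_le_mul_of_nonneg_left hcore hΔx.le
end

section
/- (l² stability of the first-order upwind scheme with periodic boundary conditions.) Let c ∈ ℝ satisfy |c|·Δt/Δx ≤ 1, let f : ℤ/Iℤ → ℝ, and define h_i = f_i − (c·Δt/Δx)·(f_{i+1/2} − f_{i−1/2}) where f_{i+1/2} = ½(f_i + f_{i+1}) − ½·sign(c)·(f_{i+1} − f_i). Then Σ_{i ∈ ℤ/Iℤ} |h_i|² ≤ Σ_{i ∈ ℤ/Iℤ} |f_i|². -/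
open Finset Real

lemma sq_convex_aux (t a b : ℝ) (ht : 0 ≤ t) (ht1 : t ≤ 1) :
    ((1 - t) * a + t * b) ^ 2 ≤ (1 - t) * a ^ 2 + t * b ^ 2 := by
  nlinarith [sq_nonneg (a - b), mul_nonneg ht (sub_nonneg.2 ht1)]

lemma sum_shift_sq {I : ℕ} [NeZero I] (f : ZMod I → ℝ) (k : ZMod I) :
    ∑ i : ZMod I, f (i + k) ^ 2 = ∑ i : ZMod I, f i ^ 2 :=
  Fintype.sum_equiv (Equiv.addRight k) _ _ (fun _ => rfl)

/-- l²-stability of the first-order upwind scheme for the linear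
advection equation with periodic boundary conditions (cells indexed by
`ZMod I`). An interface value at index `i` stands for the value at `i + 1/2`. -/
theorem upwind_l2_stability
    (I : ℕ) [NeZero I]
    (Δx Δt : ℝ) (hΔx : 0 < Δx) (hΔt : 0 < Δt)
    (c : ℝ) (hCFL : |c| * Δt / Δx ≤ 1)
    (f fIf h : ZMod I → ℝ)
    (hfIf : ∀ i, fIf i
      = (1 / 2) * (f i + f (i + 1)) - (1 / 2) * Real.sign c * (f (i + 1) - f i))
    (hh : ∀ i, h i = f i - (c * Δt / Δx) * (fIf i - fIf (i - 1))) :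
    ∑ i : ZMod I, |h i| ^ 2 ≤ ∑ i : ZMod I, |f i| ^ 2 := by
  set ν : ℝ := c * Δt / Δx with hν
  simp only [sq_abs]
  rcases lt_trichotomy c 0 with hc | hc | hc
  · -- c < 0 : sign c = -1, fIf i = f (i+1), h i = (1+ν) f i - ν f (i+1)
    have hsign : Real.sign c = -1 := Real.sign_of_neg hc
    have hν0 : ν ≤ 0 := by
      apply div_nonpos_of_nonpos_of_nonneg _ hΔx.le
      exact mul_nonpos_of_nonpos_of_nonneg hc.le hΔt.le
    have hν1 : -ν ≤ 1 := by
      have : |ν| ≤ 1 := by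
        rw [hν, abs_div, abs_mul, abs_of_pos hΔt, abs_of_pos hΔx]; exact hCFL
      linarith [neg_abs_le ν]
    have hhi : ∀ i, h i = (1 - (-ν)) * f i + (-ν) * f (i + 1) := by
      intro i
      rw [hh, hfIf, hfIf, hsign]
      have : i - 1 + 1 = i := by ring
      rw [this]; ring
    calc ∑ i : ZMod I, h i ^ 2
        ≤ ∑ i : ZMod I, ((1 - (-ν)) * f i ^ 2 + (-ν) * f (i + 1) ^ 2) := by
          refine Finset.sum_le_sum fun i _ => ?_
          rw [hhi i]
          exact sq_convex_aux (-ν) (f i) (f (i + 1)) (by linarith) hν1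
      _ = ∑ i : ZMod I, f i ^ 2 := by
          rw [Finset.sum_add_distrib, ← Finset.mul_sum, ← Finset.mul_sum,
            sum_shift_sq f 1]
          ring
  · simp only [hν, hc, zero_mul, zero_div, zero_mul, sub_zero] at hh
    simp [hh]
  · -- c > 0 : sign c = 1, fIf i = f i, h i = (1-ν) f i + ν f (i-1)
    have hsign : Real.sign c = 1 := Real.sign_of_pos hc
    have hν0 : 0 ≤ ν := by positivity
    have hν1 : ν ≤ 1 := by
      have : |ν| ≤ 1 := by
        rw [hν, abs_div, abs_mul, abs_of_pos hΔt, abs_of_pos hΔx]; exact hCFL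
      linarith [le_abs_self ν]
    have hhi : ∀ i, h i = (1 - ν) * f i + ν * f (i + (-1)) := by
      intro i
      rw [hh, hfIf, hfIf, hsign]
      have : i - 1 + 1 = i := by ring
      rw [this]
      have : i + (-1) = i - 1 := by ring
      rw [this]; ring
    calc ∑ i : ZMod I, h i ^ 2
        ≤ ∑ i : ZMod I, ((1 - ν) * f i ^ 2 + ν * f (i + (-1)) ^ 2) := by
          refine Finset.sum_le_sum fun i _ => ?_
          rw [hhi i]
          exact sq_convex_aux ν (f i) (f (i + (-1))) hν0 hν1
      _ = ∑ i : ZMod I, f i ^ 2 := by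
          rw [Finset.sum_add_distrib, ← Finset.mul_sum, ← Finset.mul_sum,
            sum_shift_sq f (-1)]
          ring
end

section
/- (Constancy of the Riemann invariants associated with the zero eigenvalue.) Let l : {k : |k| ≤ K} → ℝ satisfy Σ_k l_k·c_k·√(ω_k) = 0. Then the interface-collision sub-method f^{g,sub}_{k,i} = fⁿ_{k,i} − (c_k·Δt/Δx)·(g_{k,i+1/2} − g_{k,i−1/2}) preserves the corresponding Riemann invariant exactly: Σ_k l_k·f^{g,sub}_{k,i}/√(ω_k) = Σ_k l_k·fⁿ_{k,i}/√(ω_k) for every cell i ∈ ℤ/Iℤ. -/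
open Finset Real

/-- The interface-collision sub-method exactly preserves the
Riemann invariants associated with the zero eigenvalue, i.e. those built from
left eigenvectors `l` with `Σ_k l_k·c_k·√(ω_k) = 0`. An interface function
evaluated at `i` stands for the value at `i + 1/2`. -/
theorem riemann_invariants_constancy
    (I : ℕ) [NeZero I] (K : ℕ) (hK : 1 ≤ K)
    (Δx Δc Δt a θ : ℝ)
    (hΔx : 0 < Δx) (hΔc : 0 < Δc) (hΔt : 0 < Δt) (ha : 0 < a) (hθ : 0 < θ)
    (c ω : ℤ → ℝ)
    (hc : ∀ k : ℤ, c k = a + (k : ℝ) * Δc)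
    (hω : ∀ k : ℤ, ω k = (1 / Real.sqrt (θ * Real.pi)) * Real.exp (-(c k - a) ^ 2 / θ))
    (E : ℝ)
    (hE : E = ∫ t in (0:ℝ)..(a / Real.sqrt θ), Real.exp (-t ^ 2))
    (fn : ℤ → ZMod I → ℝ)
    (fgIf gIf : ℤ → ZMod I → ℝ) (ugIf : ZMod I → ℝ)
    (hfgIf : ∀ k i, fgIf k i
      = (1 / 2) * (fn k i + fn k (i + 1)) - E * (fn k (i + 1) - fn k i))
    (hugIf : ∀ i, ugIf i
      = ∑ l ∈ Finset.Icc (-(K : ℤ)) (K : ℤ),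
          Δc * (c l / Real.sqrt (a ^ 2 + θ / 2)) * fgIf l i)
    (hgIf : ∀ k i, gIf k i = ugIf i * ω k)
    (fgsub : ℤ → ZMod I → ℝ)
    (hfgsub : ∀ k i, fgsub k i = fn k i - (c k * Δt / Δx) * (gIf k i - gIf k (i - 1)))
    (l : ℤ → ℝ)
    (hl : ∑ k ∈ Finset.Icc (-(K : ℤ)) (K : ℤ), l k * c k * Real.sqrt (ω k) = 0) :
    ∀ i, ∑ k ∈ Finset.Icc (-(K : ℤ)) (K : ℤ), l k * fgsub k i / Real.sqrt (ω k)
      = ∑ k ∈ Finset.Icc (-(K : ℤ)) (K : ℤ), l k * fn k i / Real.sqrt (ω k) := by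
  intro i
  have hωpos : ∀ k : ℤ, 0 < ω k := by
    intro k
    rw [hω]
    have : 0 < Real.sqrt (θ * Real.pi) := Real.sqrt_pos.mpr (by positivity)
    positivity
  have key : ∀ k : ℤ, l k * fgsub k i / Real.sqrt (ω k)
      = l k * fn k i / Real.sqrt (ω k)
        - (Δt / Δx) * (ugIf i - ugIf (i - 1)) * (l k * c k * Real.sqrt (ω k)) := by
    intro k
    have hs : Real.sqrt (ω k) ≠ 0 := ne_of_gt (Real.sqrt_pos.mpr (hωpos k))
    have hsq : ω k / Real.sqrt (ω k) = Real.sqrt (ω k) := Real.div_sqrt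
    have hss : ω k = Real.sqrt (ω k) * Real.sqrt (ω k) := (Real.mul_self_sqrt (le_of_lt (hωpos k))).symm
    rw [hfgsub, hgIf, hgIf, hss]
    have h2 : Real.sqrt (Real.sqrt (ω k) * Real.sqrt (ω k)) = Real.sqrt (ω k) := by rw [← hss]
    rw [h2]
    field_simp
  calc ∑ k ∈ Finset.Icc (-(K : ℤ)) (K : ℤ), l k * fgsub k i / Real.sqrt (ω k)
      = ∑ k ∈ Finset.Icc (-(K : ℤ)) (K : ℤ),
          (l k * fn k i / Real.sqrt (ω k)
            - (Δt / Δx) * (ugIf i - ugIf (i - 1)) * (l k * c k * Real.sqrt (ω k))) := by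
        exact Finset.sum_congr rfl fun k _ => key k
    _ = ∑ k ∈ Finset.Icc (-(K : ℤ)) (K : ℤ), l k * fn k i / Real.sqrt (ω k)
        - (Δt / Δx) * (ugIf i - ugIf (i - 1))
          * ∑ k ∈ Finset.Icc (-(K : ℤ)) (K : ℤ), l k * c k * Real.sqrt (ω k) := by
        rw [Finset.sum_sub_distrib, Finset.mul_sum]
    _ = ∑ k ∈ Finset.Icc (-(K : ℤ)) (K : ℤ), l k * fn k i / Real.sqrt (ω k) := by
        rw [hl]; ring
end

section
/- (Reduction of the interface-collision sub-method to the scalar GKS scheme for the first moment.) Assume Σ_k Δc·c_k²·ω_k = a² + θ/2. Define F_i = Σ_k Δc·c_k·fⁿ_{k,i} and apply the interface-collision sub-method f^{g,sub}_{k,i} = fⁿ_{k,i} − (c_k·Δt/Δx)·(g_{k,i+1/2} − g_{k,i−1/2}). Then the updated first moment satisfies, for every i ∈ ℤ/Iℤ, Σ_k Δc·c_k·f^{g,sub}_{k,i} = F_i − √(a² + θ/2)·(Δt/Δx)·(F^g_{i+1/2} − F^g_{i−1/2}), where F^g_{i+1/2} = ½(F_i + F_{i+1}) − E·(F_{i+1}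 − F_i). -/
open Finset Real

/-- The interface-collision sub-method reduces, on the first
moment, to the scalar GKS kinetic-upwind scheme for the advection equation
with speed `√(a² + θ/2)`. An interface function evaluated at `i` stands for
the value at `i + 1/2`. -/
theorem interface_collision_reduces_to_GKS
    (I : ℕ) [NeZero I] (K : ℕ) (hK : 1 ≤ K)
    (Δx Δc Δt a θ : ℝ)
    (hΔx : 0 < Δx) (hΔc : 0 < Δc) (hΔt : 0 < Δt) (ha : 0 < a) (hθ : 0 < θ)
    (c ω : ℤ → ℝ)
    (hc : ∀ k : ℤ, c k = a + (k : ℝ) * Δc)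
    (hω : ∀ k : ℤ, ω k = (1 / Real.sqrt (θ * Real.pi)) * Real.exp (-(c k - a) ^ 2 / θ))
    (E : ℝ)
    (hE : E = ∫ t in (0:ℝ)..(a / Real.sqrt θ), Real.exp (-t ^ 2))
    (hquad2 : ∑ k ∈ Finset.Icc (-(K : ℤ)) (K : ℤ), Δc * (c k) ^ 2 * ω k = a ^ 2 + θ / 2)
    (fn : ℤ → ZMod I → ℝ)
    (fgIf gIf : ℤ → ZMod I → ℝ) (ugIf : ZMod I → ℝ)
    (hfgIf : ∀ k i, fgIf k i
      = (1 / 2) * (fn k i + fn k (i + 1)) - E * (fn k (i + 1) - fn k i))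
    (hugIf : ∀ i, ugIf i
      = ∑ l ∈ Finset.Icc (-(K : ℤ)) (K : ℤ),
          Δc * (c l / Real.sqrt (a ^ 2 + θ / 2)) * fgIf l i)
    (hgIf : ∀ k i, gIf k i = ugIf i * ω k)
    (fgsub : ℤ → ZMod I → ℝ)
    (hfgsub : ∀ k i, fgsub k i = fn k i - (c k * Δt / Δx) * (gIf k i - gIf k (i - 1)))
    (F FgIf : ZMod I → ℝ)
    (hF : ∀ i, F i = ∑ k ∈ Finset.Icc (-(K : ℤ)) (K : ℤ), Δc * c k * fn k i)
    (hFgIf : ∀ i, FgIf i = (1 / 2) * (F i + F (i + 1)) - E * (F (i + 1) - F i)) :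
    ∀ i, ∑ k ∈ Finset.Icc (-(K : ℤ)) (K : ℤ), Δc * c k * fgsub k i
      = F i - Real.sqrt (a ^ 2 + θ / 2) * (Δt / Δx) * (FgIf i - FgIf (i - 1)) := by
  intro i
  have hs2 : (0:ℝ) < a ^ 2 + θ / 2 := by positivity
  set s := Real.sqrt (a ^ 2 + θ / 2) with hsdef
  have hspos : 0 < s := Real.sqrt_pos.2 hs2
  have hss : s * s = a ^ 2 + θ / 2 := Real.mul_self_sqrt hs2.le
  have hFg : ∀ j : ZMod I, FgIf j
      = ∑ l ∈ Finset.Icc (-(K : ℤ)) (K : ℤ), Δc * c l * fgIf l j := by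
    intro j
    rw [hFgIf, hF, hF, ← Finset.sum_sub_distrib, ← Finset.sum_add_distrib,
      Finset.mul_sum, Finset.mul_sum, ← Finset.sum_sub_distrib]
    refine Finset.sum_congr rfl fun l _ => ?_
    rw [hfgIf]; ring
  have hu : ∀ j : ZMod I, s * ugIf j = FgIf j := by
    intro j
    rw [hFg, hugIf, Finset.mul_sum]
    refine Finset.sum_congr rfl fun l _ => ?_
    field_simp
  calc ∑ k ∈ Finset.Icc (-(K : ℤ)) (K : ℤ), Δc * c k * fgsub k i
      = ∑ k ∈ Finset.Icc (-(K : ℤ)) (K : ℤ),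
          (Δc * c k * fn k i
            - (Δt / Δx) * (ugIf i - ugIf (i - 1)) * (Δc * (c k) ^ 2 * ω k)) := by
        refine Finset.sum_congr rfl fun k _ => ?_
        rw [hfgsub, hgIf, hgIf]; ring
    _ = F i - (Δt / Δx) * (ugIf i - ugIf (i - 1)) * (a ^ 2 + θ / 2) := by
        rw [Finset.sum_sub_distrib, ← Finset.mul_sum, hquad2, hF]
    _ = F i - s * (Δt / Δx) * (FgIf i - FgIf (i - 1)) := by
        rw [← hu i, ← hu (i - 1), ← hss]; ring
end

section
/- (Sharp stability condition for the GKS amplification factor.) Let β and E be real numbers with β > 0 and 0 < E ≤ 1. Then the inequality 4·sin²(ξ/2)·( β·(β − E) − β²·(1 − E²)·sin²(ξ/2) ) ≤ 0 holds for every real ξ if and only if β ≤ E. -/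
open Real

/-- Sharp stability condition for the GKS amplification factor:
for `β > 0` and `0 < E ≤ 1`, the quantity `|G(ξ)|² − 1` is nonpositive for
every real `ξ` if and only if `β ≤ E`. -/
theorem gks_amplification_sharp_condition
    (β E : ℝ) (hβ : 0 < β) (hE0 : 0 < E) (hE1 : E ≤ 1) :
    (∀ ξ : ℝ, 4 * Real.sin (ξ / 2) ^ 2 *
        (β * (β - E) - β ^ 2 * (1 - E ^ 2) * Real.sin (ξ / 2) ^ 2) ≤ 0)
      ↔ β ≤ E := by
  constructor
  · intro h
    by_contra hlt
    push_neg at hlt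
    set c : ℝ := β * (β - E) with hc
    set d : ℝ := β ^ 2 * (1 - E ^ 2) with hd
    have hcpos : 0 < c := mul_pos hβ (by linarith)
    have hdnn : 0 ≤ d := mul_nonneg (sq_nonneg β) (by nlinarith)
    set t : ℝ := c / (c + d) with ht
    have htpos : 0 < t := div_pos hcpos (by linarith)
    have htle : t ≤ 1 := by
      rw [ht, div_le_one (by linarith)]; linarith
    have hs : Real.sqrt t ∈ Set.Icc (-1 : ℝ) 1 := by
      constructor
      · linarith [Real.sqrt_nonneg t]
      · exact Real.sqrt_le_one.mpr htle
    have hsin : Real.sin (2 * Real.arcsin (Real.sqrt t) / 2) = Real.sqrt t := by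
      rw [mul_div_cancel_left₀ _ (two_ne_zero)]
      exact Real.sin_arcsin hs.1 hs.2
    have hkey := h (2 * Real.arcsin (Real.sqrt t))
    rw [hsin, Real.sq_sqrt htpos.le] at hkey
    have hdt : d * t < c := by
      rw [ht]
      calc d * (c / (c + d)) = d * c / (c + d) := by ring
        _ < c := by
            rw [div_lt_iff₀ (by linarith)]
            nlinarith
    nlinarith
  · intro hβE ξ
    have hs := sq_nonneg (Real.sin (ξ / 2))
    have h1 : β * (β - E) ≤ 0 := mul_nonpos_of_nonneg_of_nonpos hβ.le (by linarith)
    have h2 : 0 ≤ β ^ 2 * (1 - E ^ 2) * Real.sin (ξ / 2) ^ 2 :=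
      mul_nonneg (mul_nonneg (sq_nonneg β) (by nlinarith)) hs
    nlinarith
end

section
/- (Convex decomposition of the UGKS into physics-process-related sub-methods.) The UGKS update satisfies, for every k with |k| ≤ K and every i ∈ ℤ/Iℤ: f^{n+1}_{k,i} = λ₁·f^f_{k,i} + λ₂·f^{g,sub}_{k,i} + λ₃·u^{n+1}_i·ω_k, where λ₁ = W/(1 + Δt/τ), λ₂ = (1 − W)/(1 + Δt/τ), λ₃ = (Δt/τ)/(1 + Δt/τ), f^f_{k,i} = fⁿ_{k,i} − (c_k·Δt/Δx)·(f_{k,i+1/2} − f_{k,i−1/2}) and f^{g,sub}_{k,i} = fⁿ_{k,i} − (c_k·Δt/Δx)·(g_{k,i+1/2} − g_{k,i−1/2}). Moreover λ₁ + λ₂ + λ₃ = 1 and 0 ≤ λ_j ≤ 1 for j = 1, 2, 3, and the macroscopic update satisfies u^{n+1}_i = W·u^f_i + (1 − W)·u^g_i, where u^f_i = uⁿ_i − (Δt/Δx)·Σ_k Δc·c_k·(f_{k,i+1/2} − f_{k,i−1/2}) and u^g_i = uⁿ_i − (Δt/Δx)·Σ_k Δc·c_k·(g_{k,i+1/2}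 − g_{k,i−1/2}). -/
open Finset Real

/-- Convex decomposition of the first-order UGKS into
physics-process-related sub-methods: free transport `ff`, interface
collisions `fgsub`, and the in-cell equilibrium projection, with convex
coefficients `λ₁ = W/(1 + Δt/τ)`, `λ₂ = (1 − W)/(1 + Δt/τ)`,
`λ₃ = (Δt/τ)/(1 + Δt/τ)`; moreover the macroscopic update is the convex
combination `u^{n+1} = W·u^f + (1 − W)·u^g`. An interface function evaluated
at `i` stands for the value at `i + 1/2`. -/
theorem ugks_convex_decomposition
    (I : ℕ) [NeZero I] (K : ℕ) (hK : 1 ≤ K)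
    (Δx Δc Δt τ a θ : ℝ)
    (hΔx : 0 < Δx) (hΔc : 0 < Δc) (hΔt : 0 < Δt) (hτ : 0 < τ) (ha : 0 < a) (hθ : 0 < θ)
    (c ω : ℤ → ℝ)
    (hc : ∀ k : ℤ, c k = a + (k : ℝ) * Δc)
    (hω : ∀ k : ℤ, ω k = (1 / Real.sqrt (θ * Real.pi)) * Real.exp (-(c k - a) ^ 2 / θ))
    (E W : ℝ)
    (hE : E = ∫ t in (0:ℝ)..(a / Real.sqrt θ), Real.exp (-t ^ 2))
    (hW : W = (τ / Δt) * (1 - Real.exp (-(Δt / τ))))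
    (fn : ℤ → ZMod I → ℝ) (un : ZMod I → ℝ)
    -- interface values (value at cell interface i + 1/2)
    (fIf fgIf gIf fstar : ℤ → ZMod I → ℝ) (ugIf Fstar : ZMod I → ℝ)
    (hfIf : ∀ k i, fIf k i
      = (1 / 2) * (fn k i + fn k (i + 1))
        - (1 / 2) * Real.sign (c k) * (fn k (i + 1) - fn k i))
    (hfgIf : ∀ k i, fgIf k i
      = (1 / 2) * (fn k i + fn k (i + 1)) - E * (fn k (i + 1) - fn k i))
    (hugIf : ∀ i, ugIf i
      = ∑ l ∈ Finset.Icc (-(K : ℤ)) (K : ℤ),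
          Δc * (c l / Real.sqrt (a ^ 2 + θ / 2)) * fgIf l i)
    (hgIf : ∀ k i, gIf k i = ugIf i * ω k)
    (hfstar : ∀ k i, fstar k i = (1 - W) * gIf k i + W * fIf k i)
    (hFstar : ∀ i, Fstar i = ∑ k ∈ Finset.Icc (-(K : ℤ)) (K : ℤ), Δc * c k * fstar k i)
    -- the UGKS update
    (un1 : ZMod I → ℝ) (fn1 : ℤ → ZMod I → ℝ)
    (hun1 : ∀ i, un1 i = un i - (Δt / Δx) * (Fstar i - Fstar (i - 1)))
    (hfn1 : ∀ k i, fn1 k i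
      = (1 + Δt / τ)⁻¹ * (fn k i - (c k * Δt / Δx) * (fstar k i - fstar k (i - 1)))
        + ((Δt / τ) / (1 + Δt / τ)) * (un1 i * ω k))
    -- the convex coefficients
    (lam₁ lam₂ lam₃ : ℝ)
    (hlam₁ : lam₁ = W / (1 + Δt / τ))
    (hlam₂ : lam₂ = (1 - W) / (1 + Δt / τ))
    (hlam₃ : lam₃ = (Δt / τ) / (1 + Δt / τ))
    -- the sub-methods
    (ff fgsub : ℤ → ZMod I → ℝ) (uf ug : ZMod I → ℝ)
    (hff : ∀ k i, ff k i = fn k i - (c k * Δt / Δx) * (fIf k i - fIf k (i - 1)))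
    (hfgsub : ∀ k i, fgsub k i = fn k i - (c k * Δt / Δx) * (gIf k i - gIf k (i - 1)))
    (huf : ∀ i, uf i = un i - (Δt / Δx) *
        ∑ k ∈ Finset.Icc (-(K : ℤ)) (K : ℤ), Δc * c k * (fIf k i - fIf k (i - 1)))
    (hug : ∀ i, ug i = un i - (Δt / Δx) *
        ∑ k ∈ Finset.Icc (-(K : ℤ)) (K : ℤ), Δc * c k * (gIf k i - gIf k (i - 1))) :
    -- the convex decomposition of the distribution-function update
    (∀ k ∈ Finset.Icc (-(K : ℤ)) (K : ℤ), ∀ i,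
        fn1 k i = lam₁ * ff k i + lam₂ * fgsub k i + lam₃ * (un1 i * ω k))
    -- the coefficients form a convex combination
    ∧ lam₁ + lam₂ + lam₃ = 1
    ∧ (0 ≤ lam₁ ∧ lam₁ ≤ 1) ∧ (0 ≤ lam₂ ∧ lam₂ ≤ 1) ∧ (0 ≤ lam₃ ∧ lam₃ ≤ 1)
    -- the convex decomposition of the macroscopic update
    ∧ (∀ i, un1 i = W * uf i + (1 - W) * ug i) := by
  have hx : 0 < Δt / τ := div_pos hΔt hτ
  have hx1 : 0 < 1 + Δt / τ := by linarith
  have hW0 : 0 ≤ W := by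
    rw [hW]
    have h1 : Real.exp (-(Δt / τ)) ≤ 1 := by
      rw [Real.exp_le_one_iff]; linarith
    have h2 : 0 ≤ τ / Δt := le_of_lt (div_pos hτ hΔt)
    nlinarith
  have hW1 : W ≤ 1 := by
    rw [hW]
    have h1 : 1 - Δt / τ ≤ Real.exp (-(Δt / τ)) := by
      have := Real.add_one_le_exp (-(Δt / τ)); linarith
    have h2 : 0 < τ / Δt := div_pos hτ hΔt
    have h3 : (τ / Δt) * (Δt / τ) = 1 := by
      field_simp
    nlinarith
  refine ⟨?_, ?_, ⟨?_, ?_⟩, ⟨?_, ?_⟩, ⟨?_, ?_⟩, ?_⟩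
  · intro k hk i
    rw [hfn1, hff, hfgsub, hlam₁, hlam₂, hlam₃, hfstar k i, hfstar k (i - 1)]
    ring
  · rw [hlam₁, hlam₂, hlam₃]; field_simp; ring
  · rw [hlam₁]; exact div_nonneg hW0 hx1.le
  · rw [hlam₁]
    rw [div_le_one hx1]; linarith
  · rw [hlam₂]; exact div_nonneg (by linarith) hx1.le
  · rw [hlam₂]
    rw [div_le_one hx1]; linarith
  · rw [hlam₃]; positivity
  · rw [hlam₃]
    rw [div_le_one hx1]; linarith
  · intro i
    rw [hun1, huf, hug, hFstar i, hFstar (i - 1), ← Finset.sum_sub_distrib]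
    have h1 : ∀ j : ZMod I,
        (∑ k ∈ Finset.Icc (-(K : ℤ)) (K : ℤ), (Δc * c k * fstar k i - Δc * c k * fstar k (i-1)))
        = W * (∑ k ∈ Finset.Icc (-(K : ℤ)) (K : ℤ), Δc * c k * (fIf k i - fIf k (i - 1)))
          + (1 - W) * (∑ k ∈ Finset.Icc (-(K : ℤ)) (K : ℤ), Δc * c k * (gIf k i - gIf k (i - 1))) := by
      intro j
      rw [Finset.mul_sum, Finset.mul_sum, ← Finset.sum_add_distrib]
      apply Finset.sum_congr rfl
      intro k _
      rw [hfstar k i, hfstar k (i - 1)]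
      ring
    rw [h1 i]
    ring
end
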